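/- Let W : (0,∞) → ℝ be three times continuously differentiable with W(Y) > 0 for all Y > 0, and suppose (Y/2)·W'(Y) + √(W(Y))·W''(Y) = 0 for all Y > 0. Define φ(Y) = Y·W'(Y) and the operator (Lφ)(Y) = −(Y/2)·φ'(Y) − (1/2)·(W''(Y)/√(W(Y)))·φ(Y) − √(W(Y))·φ''(Y). Then (Lφ)(Y) = φ(Y) for all Y > 0. -/

import Mathlib

/-!
Differentiate the profile equation `(Y/2) W' + √W W'' = 0` once and multiply by `Y`: for
`φ = Y W'` this says `Lφ + 2 √W W'' = 0`, and the profile equation itself turns `-2 √W W''`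
into `Y W' = φ`.
-/

open Set

theorem ContDiffOn.hasDerivAt_iteratedDeriv {f : ℝ → ℝ} {s : Set ℝ} {n : WithTop ℕ∞} {k : ℕ}
    (hf : ContDiffOn ℝ n f s) (hs : IsOpen s) (hk : k < n) {x : ℝ} (hx : x ∈ s) :
    HasDerivAt (iteratedDeriv k f) (iteratedDeriv (k + 1) f x) x := by
  have hdiff : DifferentiableAt ℝ (iteratedDerivWithin k f s) x :=
    (hf.differentiableOn_iteratedDerivWithin hk hs.uniqueDiffOn x hx).differentiableAt
      (hs.mem_nhds hx)
  have hev : iteratedDerivWithin k f s =ᶠ[nhds x] iteratedDeriv k f :=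
    Filter.eventuallyEq_of_mem (hs.mem_nhds hx) (iteratedDerivWithin_of_isOpen hs)
  rw [iteratedDeriv_succ]
  exact (hdiff.congr_of_eventuallyEq hev.symm).hasDerivAt

theorem deriv_id_mul {g : ℝ → ℝ} {x : ℝ} (hg : DifferentiableAt ℝ g x) :
    deriv (fun y => y * g y) x = g x + x * deriv g x := by
  rw [deriv_fun_mul differentiableAt_fun_id hg, deriv_id'', one_mul]

theorem iteratedDeriv_two_id_mul {g : ℝ → ℝ} {s : Set ℝ} (hs : IsOpen s)
    (hg : ContDiffOn ℝ 2 g s) {x : ℝ} (hx : x ∈ s) :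
    iteratedDeriv 2 (fun y => y * g y) x = 2 * deriv g x + x * iteratedDeriv 2 g x := by
  have hg' : ∀ y ∈ s, HasDerivAt g (deriv g y) y := fun y hy => by
    simpa using hg.hasDerivAt_iteratedDeriv hs (k := 0) (by norm_num) hy
  have hg'' : HasDerivAt (deriv g) (iteratedDeriv 2 g x) x := by
    simpa using hg.hasDerivAt_iteratedDeriv hs (k := 1) (by norm_num) hx
  have hev : deriv (fun y => y * g y) =ᶠ[nhds x] fun y => g y + y * deriv g y :=
    Filter.eventually_of_mem (hs.mem_nhds hx) fun y hy =>
      deriv_id_mul (hg' y hy).differentiableAt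
  rw [iteratedDeriv_succ, iteratedDeriv_one, hev.deriv_eq]
  refine (((hg' x hx).add ((hasDerivAt_id x).mul hg'')).congr_deriv ?_).deriv
  simp only [one_mul, id_eq]
  ring

theorem profile_equation_deriv {W : ℝ → ℝ} {s : Set ℝ} (hs : IsOpen s)
    (hW : ContDiffOn ℝ 3 W s)
    (heq : ∀ y ∈ s, y / 2 * deriv W y + √(W y) * iteratedDeriv 2 W y = 0)
    {x : ℝ} (hx : x ∈ s) (hWx : W x ≠ 0) :
    deriv W x / 2 + x / 2 * iteratedDeriv 2 W x
      + deriv W x / (2 * √(W x)) * iteratedDeriv 2 W x + √(W x) * iteratedDeriv 3 W x = 0 := by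
  have hW1 : HasDerivAt W (deriv W x) x := by
    simpa using hW.hasDerivAt_iteratedDeriv hs (k := 0) (by norm_num) hx
  have hW2 : HasDerivAt (deriv W) (iteratedDeriv 2 W x) x := by
    simpa using hW.hasDerivAt_iteratedDeriv hs (k := 1) (by norm_num) hx
  have hW3 : HasDerivAt (iteratedDeriv 2 W) (iteratedDeriv 3 W x) x :=
    hW.hasDerivAt_iteratedDeriv hs (k := 2) (by norm_num) hx
  have hprofile := (((hasDerivAt_id x).div_const 2).mul hW2).add ((hW1.sqrt hWx).mul hW3)
  have hzero : (fun y => y / 2 * deriv W y + √(W y) * iteratedDeriv 2 W y) =ᶠ[nhds x] 0 :=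
    Filter.eventually_of_mem (hs.mem_nhds hx) heq
  rw [← (hprofile.congr_of_eventuallyEq hzero.symm).unique (hasDerivAt_const x 0)]
  simp only [one_div, id_eq]
  ring

theorem linearized_operator_apply_eq_of_profile {Y s w₁ w₂ w₃ : ℝ} (hs : s ≠ 0)
    (hprofile : Y / 2 * w₁ + s * w₂ = 0)
    (hprofile' : w₁ / 2 + Y / 2 * w₂ + w₁ / (2 * s) * w₂ + s * w₃ = 0) :
    -(Y / 2) * (w₁ + Y * w₂) - 1 / 2 * (w₂ / s) * (Y * w₁) - s * (2 * w₂ + Y * w₃) = Y * w₁ := by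
  field_simp
  field_simp at hprofile'
  linear_combination (-Y) * hprofile' - 4 * s * hprofile

theorem linearized_operator_eigenfunction (W : ℝ → ℝ)
    (hW : ContDiffOn ℝ 3 W (Set.Ioi 0))
    (hpos : ∀ Y > (0:ℝ), 0 < W Y)
    (heq : ∀ Y > (0:ℝ), (Y/2) * deriv W Y + Real.sqrt (W Y) * iteratedDeriv 2 W Y = 0)
    (φ : ℝ → ℝ) (hφ : ∀ Y, φ Y = Y * deriv W Y) :
    ∀ Y > (0:ℝ),
      -(Y/2) * deriv φ Y - (1/2) * (iteratedDeriv 2 W Y / Real.sqrt (W Y)) * φ Y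
        - Real.sqrt (W Y) * iteratedDeriv 2 φ Y = φ Y := by
  intro Y hY
  have hW' : ContDiffOn ℝ 2 (deriv W) (Ioi 0) := hW.deriv_of_isOpen isOpen_Ioi (by norm_num)
  have hW'' : deriv (deriv W) = iteratedDeriv 2 W := by
    rw [iteratedDeriv_succ', iteratedDeriv_one]
  have hW''' : iteratedDeriv 2 (deriv W) = iteratedDeriv 3 W := (iteratedDeriv_succ').symm
  rw [funext hφ, deriv_id_mul ((hW'.differentiableOn (by norm_num)).differentiableAt
    (Ioi_mem_nhds hY)), iteratedDeriv_two_id_mul isOpen_Ioi hW' hY, hW'', hW''']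
  exact linearized_operator_apply_eq_of_profile (Real.sqrt_pos.mpr (hpos Y hY)).ne' (heq Y hY)
    (profile_equation_deriv isOpen_Ioi hW heq hY (hpos Y hY).ne')
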